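/- Let the true system satisfy x_{t+1} = Σ_{k=1}^{K} H_2^{k-1} H_1 v_{t,k} + 𝐰_t and an approximating system satisfy x̂_{t+1} = Σ_{k=1}^{K} Ĥ_2^{k-1} Ĥ_1 v̂_{t,k} + ŵ_t, where ‖H_2^{k}‖ ≤ ρ^{k}, ‖Ĥ_2^{k}‖ ≤ ϱ^{k} with 0 < ρ ≤ ϱ < 1, ‖H_1‖ ≤ h, ‖Ĥ_1 − H_1‖ ≤ δ, ‖Ĥ_2^{k} − H_2^{k}‖ ≤ k ϱ^{k} δ, ‖v_{t,k}‖, ‖v̂_{t,k}‖ ≤ V, ‖v_{t,k} − v̂_{t,k}‖ ≤ η, and ‖𝐰_t − ŵ_t‖ ≤ μ. Then ‖x_{t+1} − x̂_{t+1}‖ ≤ h η/(1−ρ) + V δ/(1−ϱ) + (h+δ) V δ ϱ/(1−ϱ)² + μ. -/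
import Mathlib

lemma geom_partial_le {r : ℝ} (h0 : 0 ≤ r) (h1 : r < 1) (K : ℕ) :
    ∑ k ∈ Finset.range K, r ^ k ≤ 1 / (1 - r) := by
  have hsumm : Summable fun k : ℕ => r ^ k := summable_geometric_of_lt_one h0 h1
  have := Summable.sum_le_tsum (Finset.range K) (fun i _ => pow_nonneg h0 i) hsumm
  rwa [tsum_geometric_of_lt_one h0 h1, ← one_div] at this

lemma arith_geom_partial_le {r : ℝ} (h0 : 0 ≤ r) (h1 : r < 1) (K : ℕ) :
    ∑ k ∈ Finset.range K, (k : ℝ) * r ^ k ≤ r / (1 - r) ^ 2 := by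
  have hr : ‖r‖ < 1 := by rwa [Real.norm_eq_abs, abs_of_nonneg h0]
  have hs := hasSum_coe_mul_geometric_of_norm_lt_one (𝕜 := ℝ) hr
  have := Summable.sum_le_tsum (Finset.range K)
    (fun i _ => by positivity) hs.summable
  rwa [hs.tsum_eq] at this

/-- State-comparison bound between the true L-step system
x_{t+1} = Σ_{k=1}^{K} H₂^{k-1} H₁ v_{t,k} + 𝐰_t and the approximating system
x̂_{t+1} = Σ_{k=1}^{K} Ĥ₂^{k-1} Ĥ₁ v̂_{t,k} + ŵ_t, under the stated norm bounds:
‖x_{t+1} − x̂_{t+1}‖ ≤ hη/(1−ρ) + Vδ/(1−ϱ) + (h+δ)Vδϱ/(1−ϱ)² + μ. -/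
theorem stmt_16 {n p : ℕ} (K : ℕ)
    (H1 H1' : EuclideanSpace ℝ (Fin p) →L[ℝ] EuclideanSpace ℝ (Fin n))
    (H2 H2' : EuclideanSpace ℝ (Fin n) →L[ℝ] EuclideanSpace ℝ (Fin n))
    (ρ ϱ h δ V η μ : ℝ)
    (hρ0 : 0 < ρ) (hρϱ : ρ ≤ ϱ) (hϱ1 : ϱ < 1)
    (hH2 : ∀ k : ℕ, ‖H2 ^ k‖ ≤ ρ ^ k)
    (hH2' : ∀ k : ℕ, ‖H2' ^ k‖ ≤ ϱ ^ k)
    (hH1 : ‖H1‖ ≤ h)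
    (hH1d : ‖H1' - H1‖ ≤ δ)
    (hH2d : ∀ k : ℕ, ‖H2' ^ k - H2 ^ k‖ ≤ (k : ℝ) * ϱ ^ k * δ)
    (v v' : ℕ → EuclideanSpace ℝ (Fin p))
    (hv : ∀ k, ‖v k‖ ≤ V) (hv' : ∀ k, ‖v' k‖ ≤ V)
    (hvd : ∀ k, ‖v k - v' k‖ ≤ η)
    (bw bw' : EuclideanSpace ℝ (Fin n))
    (hw : ‖bw - bw'‖ ≤ μ) :
    ‖(∑ k ∈ Finset.range K, (H2 ^ k) (H1 (v k)) + bw)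
      - (∑ k ∈ Finset.range K, (H2' ^ k) (H1' (v' k)) + bw')‖
      ≤ h * η / (1 - ρ) + V * δ / (1 - ϱ) + (h + δ) * V * δ * ϱ / (1 - ϱ) ^ 2 + μ := by
  have hh0 : 0 ≤ h := le_trans (norm_nonneg _) hH1
  have hδ0 : 0 ≤ δ := le_trans (norm_nonneg _) hH1d
  have hη0 : 0 ≤ η := le_trans (norm_nonneg _) (hvd 0)
  have hV0 : 0 ≤ V := le_trans (norm_nonneg _) (hv 0)
  have hϱ0 : 0 ≤ ϱ := le_trans hρ0.le hρϱ
  have hρ1 : ρ < 1 := lt_of_le_of_lt hρϱ hϱ1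
  have h1ρ : 0 < 1 - ρ := by linarith
  have h1ϱ : 0 < 1 - ϱ := by linarith
  have hH1' : ‖H1'‖ ≤ h + δ := by
    calc ‖H1'‖ = ‖H1 + (H1' - H1)‖ := by rw [add_sub_cancel]
    _ ≤ ‖H1‖ + ‖H1' - H1‖ := norm_add_le _ _
    _ ≤ h + δ := add_le_add hH1 hH1d
  -- termwise bound
  have key : ∀ k ∈ Finset.range K,
      ‖(H2 ^ k) (H1 (v k)) - (H2' ^ k) (H1' (v' k))‖
        ≤ h * η * ρ ^ k + V * δ * ρ ^ k + (h + δ) * V * δ * ((k : ℝ) * ϱ ^ k) := by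
    intro k _
    have hdecomp : (H2 ^ k) (H1 (v k)) - (H2' ^ k) (H1' (v' k))
        = (H2 ^ k) (H1 (v k - v' k)) + (H2 ^ k) ((H1 - H1') (v' k))
          + ((H2 ^ k - H2' ^ k) (H1' (v' k))) := by
      simp only [ContinuousLinearMap.sub_apply, map_sub]
      abel
    rw [hdecomp]
    have hρk : (0:ℝ) ≤ ρ ^ k := pow_nonneg hρ0.le k
    have b1 : ‖(H2 ^ k) (H1 (v k - v' k))‖ ≤ ρ ^ k * (h * η) := by
      calc ‖(H2 ^ k) (H1 (v k - v' k))‖ ≤ ‖H2 ^ k‖ * ‖H1 (v k - v' k)‖ :=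
            (H2 ^ k).le_opNorm _
        _ ≤ ‖H2 ^ k‖ * (‖H1‖ * ‖v k - v' k‖) := mul_le_mul_of_nonneg_left (H1.le_opNorm _) (norm_nonneg _)
        _ ≤ ρ ^ k * (h * η) := by
            apply mul_le_mul (hH2 k) _ (by positivity) hρk
            exact mul_le_mul hH1 (hvd k) (norm_nonneg _) hh0
    have b2 : ‖(H2 ^ k) ((H1 - H1') (v' k))‖ ≤ ρ ^ k * (δ * V) := by
      have hd : ‖H1 - H1'‖ ≤ δ := by rwa [norm_sub_rev]
      calc ‖(H2 ^ k) ((H1 - H1') (v' k))‖ ≤ ‖H2 ^ k‖ * ‖(H1 - H1') (v' k)‖ :=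
            (H2 ^ k).le_opNorm _
        _ ≤ ‖H2 ^ k‖ * (‖H1 - H1'‖ * ‖v' k‖) := mul_le_mul_of_nonneg_left ((H1 - H1').le_opNorm _) (norm_nonneg _)
        _ ≤ ρ ^ k * (δ * V) := by
            apply mul_le_mul (hH2 k) _ (by positivity) hρk
            exact mul_le_mul hd (hv' k) (norm_nonneg _) hδ0
    have b3 : ‖(H2 ^ k - H2' ^ k) (H1' (v' k))‖
        ≤ ((k : ℝ) * ϱ ^ k * δ) * ((h + δ) * V) := by
      have hd : ‖H2 ^ k - H2' ^ k‖ ≤ (k : ℝ) * ϱ ^ k * δ := by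
        rw [norm_sub_rev]; exact hH2d k
      calc ‖(H2 ^ k - H2' ^ k) (H1' (v' k))‖
          ≤ ‖H2 ^ k - H2' ^ k‖ * ‖H1' (v' k)‖ := (H2 ^ k - H2' ^ k).le_opNorm _
        _ ≤ ‖H2 ^ k - H2' ^ k‖ * (‖H1'‖ * ‖v' k‖) := mul_le_mul_of_nonneg_left (H1'.le_opNorm _) (norm_nonneg _)
        _ ≤ ((k : ℝ) * ϱ ^ k * δ) * ((h + δ) * V) := by
            apply mul_le_mul hd _ (by positivity) (by positivity)
            exact mul_le_mul hH1' (hv' k) (norm_nonneg _) (by positivity)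
    calc ‖(H2 ^ k) (H1 (v k - v' k)) + (H2 ^ k) ((H1 - H1') (v' k))
            + (H2 ^ k - H2' ^ k) (H1' (v' k))‖
        ≤ ‖(H2 ^ k) (H1 (v k - v' k)) + (H2 ^ k) ((H1 - H1') (v' k))‖
            + ‖(H2 ^ k - H2' ^ k) (H1' (v' k))‖ := norm_add_le _ _
      _ ≤ (‖(H2 ^ k) (H1 (v k - v' k))‖ + ‖(H2 ^ k) ((H1 - H1') (v' k))‖)
            + ‖(H2 ^ k - H2' ^ k) (H1' (v' k))‖ := by gcongr; exact norm_add_le _ _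
      _ ≤ (ρ ^ k * (h * η) + ρ ^ k * (δ * V)) + ((k : ℝ) * ϱ ^ k * δ) * ((h + δ) * V) := by
          gcongr
      _ = h * η * ρ ^ k + V * δ * ρ ^ k + (h + δ) * V * δ * ((k : ℝ) * ϱ ^ k) := by ring
  have hsum : ‖∑ k ∈ Finset.range K, ((H2 ^ k) (H1 (v k)) - (H2' ^ k) (H1' (v' k)))‖
      ≤ h * η / (1 - ρ) + V * δ / (1 - ϱ) + (h + δ) * V * δ * ϱ / (1 - ϱ) ^ 2 := by
    calc ‖∑ k ∈ Finset.range K, ((H2 ^ k) (H1 (v k)) - (H2' ^ k) (H1' (v' k)))‖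
        ≤ ∑ k ∈ Finset.range K,
            (h * η * ρ ^ k + V * δ * ρ ^ k + (h + δ) * V * δ * ((k : ℝ) * ϱ ^ k)) :=
          norm_sum_le_of_le _ key
      _ = h * η * (∑ k ∈ Finset.range K, ρ ^ k)
            + V * δ * (∑ k ∈ Finset.range K, ρ ^ k)
            + (h + δ) * V * δ * (∑ k ∈ Finset.range K, (k : ℝ) * ϱ ^ k) := by
          simp [Finset.sum_add_distrib, Finset.mul_sum]
      _ ≤ h * η * (1 / (1 - ρ)) + V * δ * (1 / (1 - ρ))
            + (h + δ) * V * δ * (ϱ / (1 - ϱ) ^ 2) := by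
          gcongr <;> first
            | exact geom_partial_le hρ0.le hρ1 K
            | exact arith_geom_partial_le hϱ0 hϱ1 K
      _ ≤ h * η / (1 - ρ) + V * δ / (1 - ϱ) + (h + δ) * V * δ * ϱ / (1 - ϱ) ^ 2 := by
          have hle : V * δ * (1 / (1 - ρ)) ≤ V * δ / (1 - ϱ) := by
            rw [mul_one_div, div_le_div_iff₀ h1ρ h1ϱ]
            nlinarith [mul_nonneg hV0 hδ0, mul_nonneg (mul_nonneg hV0 hδ0) (sub_nonneg.mpr hρϱ)]
          have h1 : h * η * (1 / (1 - ρ)) = h * η / (1 - ρ) := by ring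
          have h2 : (h + δ) * V * δ * (ϱ / (1 - ϱ) ^ 2)
              = (h + δ) * V * δ * ϱ / (1 - ϱ) ^ 2 := by ring
          linarith
  calc ‖(∑ k ∈ Finset.range K, (H2 ^ k) (H1 (v k)) + bw)
        - (∑ k ∈ Finset.range K, (H2' ^ k) (H1' (v' k)) + bw')‖
      = ‖(∑ k ∈ Finset.range K, ((H2 ^ k) (H1 (v k)) - (H2' ^ k) (H1' (v' k))))
          + (bw - bw')‖ := by rw [Finset.sum_sub_distrib]; abel_nf
    _ ≤ ‖∑ k ∈ Finset.range K, ((H2 ^ k) (H1 (v k)) - (H2' ^ k) (H1' (v' k)))‖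
          + ‖bw - bw'‖ := norm_add_le _ _
    _ ≤ h * η / (1 - ρ) + V * δ / (1 - ϱ) + (h + δ) * V * δ * ϱ / (1 - ϱ) ^ 2 + μ :=
        add_le_add hsum hw
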